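/- Let S : ℝ → Sym(n) be a smooth curve of real symmetric n×n matrices with Ṡ(t) invertible for every t, and let R_S(t) = ½ Ṡ(t)⁻¹ S⃛(t) − ¾ (Ṡ(t)⁻¹ S̈(t))² be its curvature. Then for every t the matrix Ṡ(t)·R_S(t) is symmetric. Consequently, if Ṡ(t) is positive definite (the curve is regular and monotone increasing), then R_S(t) is self-adjoint with respect to the inner product ⟨x, y⟩ = xᵀṠ(t)y on ℝⁿ; in particular R_S(t) is diagonalizable with only real eigenvalues. -/

import Mathlib

open Matrix

/-- Entrywise derivative of a matrix-valued curve. -/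
noncomputable def matDeriv {n : ℕ} (S : ℝ → Matrix (Fin n) (Fin n) ℝ) :
    ℝ → Matrix (Fin n) (Fin n) ℝ :=
  fun t => Matrix.of fun i j => deriv (fun τ => S τ i j) t

/-- The curvature of a regular curve of symmetric matrices, in closed form:
`R_S(t) = ½ Ṡ(t)⁻¹ S⃛(t) − ¾ (Ṡ(t)⁻¹ S̈(t))²`. -/
noncomputable def curvatureClosed {n : ℕ} (S : ℝ → Matrix (Fin n) (Fin n) ℝ) :
    ℝ → Matrix (Fin n) (Fin n) ℝ :=
  fun t =>
    (1 / 2 : ℝ) • ((matDeriv S t)⁻¹ * matDeriv (matDeriv (matDeriv S)) t)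
      - (3 / 4 : ℝ) • ((matDeriv S t)⁻¹ * matDeriv (matDeriv S) t) ^ 2

lemma matDeriv_isSymm {n : ℕ} {S : ℝ → Matrix (Fin n) (Fin n) ℝ}
    (h : ∀ t, (S t).IsSymm) (t : ℝ) : (matDeriv S t).IsSymm := by
  ext i j
  simp only [matDeriv, Matrix.transpose_apply, Matrix.of_apply]
  congr 1
  funext τ
  exact (h τ).apply i j

open scoped MatrixOrder in
lemma psd_sqrt_exists {n : ℕ} {A : Matrix (Fin n) (Fin n) ℝ} (h : A.PosSemidef) :
    ∃ Q : Matrix (Fin n) (Fin n) ℝ, Q * Q = A ∧ Q.IsSymm := by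
  refine ⟨CFC.sqrt A, CFC.sqrt_mul_sqrt_self A h.nonneg, ?_⟩
  have := (CFC.sqrt_nonneg A).posSemidef.isHermitian
  rwa [Matrix.IsHermitian, Matrix.conjTranspose_eq_transpose_of_trivial] at this

/-- **Self-adjointness of the curvature operator.**
For a smooth regular curve `S` of symmetric matrices, `Ṡ(t)·R_S(t)` is symmetric; hence if
`Ṡ(t)` is positive definite, `R_S(t)` is self-adjoint for the inner product
`⟨x,y⟩ = xᵀṠ(t)y`, and in particular diagonalizable with real eigenvalues. -/
theorem curvature_self_adjoint
    (n : ℕ) (S : ℝ → Matrix (Fin n) (Fin n) ℝ)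
    (hsymm : ∀ t, (S t).IsSymm)
    (hsmooth : ∀ i j, ContDiff ℝ (⊤ : ℕ∞) fun t => S t i j)
    (hreg : ∀ t, IsUnit (matDeriv S t))
    (t : ℝ) :
    (matDeriv S t * curvatureClosed S t).IsSymm ∧
    ((matDeriv S t).PosDef →
      (∀ x y : Fin n → ℝ,
        (curvatureClosed S t *ᵥ x) ⬝ᵥ (matDeriv S t *ᵥ y)
          = x ⬝ᵥ (matDeriv S t *ᵥ (curvatureClosed S t *ᵥ y))) ∧
      ∃ (P : Matrix (Fin n) (Fin n) ℝ) (d : Fin n → ℝ),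
        IsUnit P ∧ curvatureClosed S t = P * Matrix.diagonal d * P⁻¹) := by
  set A := matDeriv S t with hAdef
  set B := matDeriv (matDeriv S) t with hBdef
  set C := matDeriv (matDeriv (matDeriv S)) t with hCdef
  have hA : A.IsSymm := matDeriv_isSymm hsymm t
  have hB : B.IsSymm := matDeriv_isSymm (matDeriv_isSymm hsymm) t
  have hC : C.IsSymm := matDeriv_isSymm (matDeriv_isSymm (matDeriv_isSymm hsymm)) t
  haveI : Invertible A := (hreg t).nonempty_invertible.some
  have hAinv : A⁻¹.IsSymm := by
    rw [Matrix.IsSymm, Matrix.transpose_nonsing_inv, hA]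
  have hAR : A * curvatureClosed S t
      = (1 / 2 : ℝ) • C - (3 / 4 : ℝ) • (B * A⁻¹ * B) := by
    rw [curvatureClosed]
    rw [← hAdef, ← hBdef, ← hCdef]
    rw [Matrix.mul_sub, Matrix.mul_smul, Matrix.mul_smul, sq]
    rw [← Matrix.mul_assoc, Matrix.mul_inv_of_invertible, Matrix.one_mul]
    congr 1
    rw [← Matrix.mul_assoc, ← Matrix.mul_assoc, ← Matrix.mul_assoc A A⁻¹ B,
      Matrix.mul_inv_of_invertible, Matrix.one_mul]
  have hARsymm : (A * curvatureClosed S t).IsSymm := by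
    rw [hAR, Matrix.IsSymm, Matrix.transpose_sub, Matrix.transpose_smul,
      Matrix.transpose_smul, Matrix.transpose_mul, Matrix.transpose_mul,
      hB.eq, hAinv.eq, hC.eq, Matrix.mul_assoc]
  refine ⟨hARsymm, fun hpd => ?_⟩
  set R := curvatureClosed S t with hRdef
  have hkey : Rᵀ * A = A * R := by
    have := hARsymm.eq
    rwa [Matrix.transpose_mul, hA.eq] at this
  constructor
  · intro x y
    rw [← Matrix.vecMul_transpose, ← Matrix.dotProduct_mulVec,
      Matrix.mulVec_mulVec, hkey, ← Matrix.mulVec_mulVec]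
  · -- diagonalization
    have hQps := hpd.posSemidef
    obtain ⟨Q, hQQ, hQsymm⟩ := psd_sqrt_exists hQps
    haveI : Invertible Q := by
      refine Matrix.invertibleOfIsUnitDet Q ?_
      have hdetA : IsUnit A.det := (Matrix.isUnit_iff_isUnit_det A).mp (hreg t)
      rw [← hQQ, Matrix.det_mul] at hdetA
      exact isUnit_of_mul_isUnit_left hdetA
    have hQinv : Q⁻¹.IsSymm := by
      rw [Matrix.IsSymm, Matrix.transpose_nonsing_inv, hQsymm.eq]
    set M := Q⁻¹ * (A * R) * Q⁻¹ with hMdef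
    have hMherm : M.IsHermitian := by
      rw [Matrix.IsHermitian, Matrix.conjTranspose_eq_transpose_of_trivial,
        hMdef, Matrix.transpose_mul, Matrix.transpose_mul, hQinv.eq, hARsymm.eq]
      simp only [Matrix.mul_assoc]
    set U : Matrix (Fin n) (Fin n) ℝ := (hMherm.eigenvectorUnitary : Matrix (Fin n) (Fin n) ℝ)
      with hUdef
    have hUU : U * star U = 1 := Matrix.mem_unitaryGroup_iff.mp hMherm.eigenvectorUnitary.2
    have hPinv : (Q⁻¹ * U) * (star U * Q) = 1 := by
      rw [Matrix.mul_assoc, ← Matrix.mul_assoc U, hUU, Matrix.one_mul,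
        Matrix.inv_mul_of_invertible]
    refine ⟨Q⁻¹ * U, hMherm.eigenvalues,
      ⟨⟨Q⁻¹ * U, star U * Q, hPinv, mul_eq_one_comm.mp hPinv⟩, rfl⟩, ?_⟩
    rw [Matrix.inv_eq_right_inv hPinv]
    have hspec := hMherm.spectral_theorem
    have hdiag : Matrix.diagonal (RCLike.ofReal ∘ hMherm.eigenvalues)
        = Matrix.diagonal hMherm.eigenvalues := by
      congr 1
    have hRM : R = Q⁻¹ * M * Q := by
      symm
      simp only [hMdef, Matrix.mul_assoc]
      rw [Matrix.inv_mul_of_invertible, Matrix.mul_one, ← Matrix.mul_assoc Q⁻¹ Q⁻¹,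
        ← Matrix.mul_inv_rev, hQQ, ← Matrix.mul_assoc, Matrix.inv_mul_of_invertible,
        Matrix.one_mul]
    rw [hRM]
    conv_lhs => rw [hspec, hdiag]
    simp only [Unitary.conjStarAlgAut_apply, Matrix.mul_assoc]
    rfl
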